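/- Let r ≥ 1, δ ≥ 0, 0 < γ < n/r, r < p < n/γ, 1/q = 1/p − γ/n and 1/r' = 1 − 1/r. Set σ = nr/(n−rγ), ν = nδ/(n−rγ), β = (q/σ)(1/p + 1/r'), and define ξ(z) = z^{q/β} for 0 ≤ z ≤ 1 and ξ(z) = z^σ(1+log⁺z)^ν for z > 1, and φ(z) = z^{q/p+q/r'}(1+log⁺z)^ν. Then there is a constant C > 0 (depending only on n, r, δ, γ, p) such that for every weight v and every x ∈ ℝ^n, (M_ξ(v^β)(x))^{1/β} ≤ C·M_φ v(x). -/

import Mathlib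

open MeasureTheory Real Filter

noncomputable section

/-- A cube in `ℝⁿ` with sides parallel to the coordinate axes. -/
structure Cube (n : ℕ) where
  corner : Fin n → ℝ
  side : ℝ
  side_pos : 0 < side

namespace Cube

variable {n : ℕ}

/-- The set of points of the cube. -/
def toSet (Q : Cube n) : Set (Fin n → ℝ) :=
  {x | ∀ i, Q.corner i ≤ x i ∧ x i ≤ Q.corner i + Q.side}

/-- The Lebesgue measure `|Q|` of the cube. -/
def vol (Q : Cube n) : ℝ := Q.side ^ n

end Cube

variable {n : ℕ}

/-- Average `(1/|Q|)∫_Q f` of `f` over the cube `Q`. -/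
def cubeAvg (Q : Cube n) (f : (Fin n → ℝ) → ℝ) : ℝ :=
  (Q.vol)⁻¹ * ∫ x in Q.toSet, f x

/-- Luxemburg average `‖f‖_{Φ,Q}`. -/
def luxAvg (Φ : ℝ → ℝ) (Q : Cube n) (f : (Fin n → ℝ) → ℝ) : ℝ :=
  sInf {lam : ℝ | 0 < lam ∧ (Q.vol)⁻¹ * ∫ x in Q.toSet, Φ (|f x| / lam) ≤ 1}

/-- Generalized maximal operator `M_Φ`. -/
def maximalOp (Φ : ℝ → ℝ) (f : (Fin n → ℝ) → ℝ) (x : Fin n → ℝ) : ℝ :=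
  sSup {r : ℝ | ∃ Q : Cube n, x ∈ Q.toSet ∧ r = luxAvg Φ Q f}

/-- Generalized fractional maximal operator `M_{γ,Φ}`. -/
def fracMaximalOp (γ : ℝ) (Φ : ℝ → ℝ) (f : (Fin n → ℝ) → ℝ) (x : Fin n → ℝ) : ℝ :=
  sSup {r : ℝ | ∃ Q : Cube n, x ∈ Q.toSet ∧ r = Q.vol ^ (γ / (n : ℝ)) * luxAvg Φ Q f}

/-- Weighted Luxemburg norm `‖g‖_{θ,Q,w}` with respect to the measure `w dx`. -/
def luxNormW (θ : ℝ → ℝ) (Q : Cube n) (w g : (Fin n → ℝ) → ℝ) : ℝ :=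
  sInf {lam : ℝ | 0 < lam ∧
    (∫ x in Q.toSet, w x)⁻¹ * ∫ x in Q.toSet, θ (|g x| / lam) * w x ≤ 1}

/-- A weight: a nonnegative locally integrable function on `ℝⁿ`. -/
def IsWeight (w : (Fin n → ℝ) → ℝ) : Prop :=
  (∀ x, 0 ≤ w x) ∧ LocallyIntegrable w volume

/-- A Young function: convex, increasing, `Φ(0)=0`, `Φ(t)→∞`. -/
def IsYoung (Φ : ℝ → ℝ) : Prop :=
  ConvexOn ℝ (Set.Ici 0) Φ ∧ MonotoneOn Φ (Set.Ici 0) ∧ Φ 0 = 0 ∧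
    Tendsto Φ atTop atTop

/-- `Φ ∈ 𝔉_{r,δ}`: a submultiplicative Young function of lower type `r`
satisfying `Φ(t)/t^r ≤ C₀ (log t)^δ` for `t ≥ t*`. -/
def MemF (r δ : ℝ) (Φ : ℝ → ℝ) : Prop :=
  IsYoung Φ ∧
  (∀ s t : ℝ, 0 ≤ s → 0 ≤ t → Φ (s * t) ≤ Φ s * Φ t) ∧
  (∃ C > 0, ∀ s t : ℝ, 0 < s → s ≤ 1 → 0 < t → Φ (s * t) ≤ C * s ^ r * Φ t) ∧
  (∃ C₀ > 0, ∃ tstar ≥ (1 : ℝ), ∀ t ≥ tstar, Φ t / t ^ r ≤ C₀ * Real.log t ^ δ)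

/-- The Muckenhoupt `A₁` condition. -/
def MemA1 (u : (Fin n → ℝ) → ℝ) : Prop :=
  ∃ C > 0, ∀ Q : Cube n, cubeAvg Q u ≤ C * essInf u (volume.restrict Q.toSet)

/-- The `A_∞` quantity of `w` on a cube `Q`. -/
def ainfQ (w : (Fin n → ℝ) → ℝ) (Q : Cube n) : ℝ :=
  cubeAvg Q w * Real.exp (cubeAvg Q fun x => Real.log (w x)⁻¹)

/-- `w ∈ A_∞`. -/
def MemAinf (w : (Fin n → ℝ) → ℝ) : Prop :=
  BddAbove (Set.range (ainfQ w))

/-- The `A_∞` constant `[w]_{A_∞}`. -/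
def ainfConst (w : (Fin n → ℝ) → ℝ) : ℝ :=
  ⨆ Q : Cube n, ainfQ w Q

/-- The `A_q` quantity of `w` on a cube `Q`. -/
def aqQ (q : ℝ) (w : (Fin n → ℝ) → ℝ) (Q : Cube n) : ℝ :=
  cubeAvg Q w * (cubeAvg Q fun x => w x ^ (1 / (1 - q))) ^ (q - 1)

/-- `w ∈ A_q`. -/
def MemAq (q : ℝ) (w : (Fin n → ℝ) → ℝ) : Prop :=
  BddAbove (Set.range (aqQ q w))

/-- The `A_q` constant `[w]_{A_q}`. -/
def aqConst (q : ℝ) (w : (Fin n → ℝ) → ℝ) : ℝ :=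
  ⨆ Q : Cube n, aqQ q w Q

/-- The reverse Hölder `RH_s` quantity of `w` on a cube `Q`. -/
def rhQ (s : ℝ) (w : (Fin n → ℝ) → ℝ) (Q : Cube n) : ℝ :=
  (cubeAvg Q fun x => w x ^ s) ^ (1 / s) / cubeAvg Q w

/-- `w ∈ RH_s`. -/
def MemRH (s : ℝ) (w : (Fin n → ℝ) → ℝ) : Prop :=
  BddAbove (Set.range (rhQ s w))

/-- The reverse Hölder constant `[w]_{RH_s}`. -/
def rhConst (s : ℝ) (w : (Fin n → ℝ) → ℝ) : ℝ :=
  ⨆ Q : Cube n, rhQ s w Q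

/-- `log⁺ z = max(log z, 0)`. -/
def logPlus (z : ℝ) : ℝ := max (Real.log z) 0

/-- `η_ε(z) = z (1 + log⁺ z)^{δ/ε}`. -/
def eta (δ ε z : ℝ) : ℝ := z * (1 + logPlus z) ^ (δ / ε)

/-!
The substitution `z = t ^ β` turns `ξ (t ^ β)` into `t ^ q` on `[0, 1]` and into
`t ^ (q/p + q/r') * (1 + β log t) ^ ν` beyond, so the Luxemburg average of `v ^ β` for `ξ` is the
`β`-th power of the Luxemburg average of `v` for this profile, and likewise for the maximal
operators. The profile and `φ` dominate each other after a fixed dilation `K`, up to an additive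
constant, which compares their Luxemburg averages, hence their maximal operators, within the
factor `K`. The comparison is needed in both directions because the supremum of an unbounded set
of reals is `0`.
-/

open Set

lemma sInf_image_rpow {S : Set ℝ} {β : ℝ} (hS : ∀ s ∈ S, 0 ≤ s) (hβ : 0 < β) :
    sInf ((· ^ β) '' S) = sInf S ^ β := by
  rcases S.eq_empty_or_nonempty with rfl | hne
  · simp [Real.zero_rpow hβ.ne']
  · refine (MonotoneOn.map_csInf_of_continuousWithinAt ?_ ?_ hne ⟨0, hS⟩).symm
    · exact (Real.continuousAt_rpow_const _ _ (Or.inr hβ.le)).continuousWithinAt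
    · exact fun s hs t _ hst => Real.rpow_le_rpow (hS s hs) hst hβ.le

lemma sSup_image_rpow {S : Set ℝ} {β : ℝ} (hS : ∀ s ∈ S, 0 ≤ s) (hβ : 0 < β) :
    sSup ((· ^ β) '' S) = sSup S ^ β := by
  by_cases hbdd : BddAbove S
  · rcases S.eq_empty_or_nonempty with rfl | hne
    · simp [Real.zero_rpow hβ.ne']
    · refine (MonotoneOn.map_csSup_of_continuousWithinAt ?_ ?_ hne hbdd).symm
      · exact (Real.continuousAt_rpow_const _ _ (Or.inr hβ.le)).continuousWithinAt
      · exact fun s hs t _ hst => Real.rpow_le_rpow (hS s hs) hst hβ.le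
  · have hbdd' : ¬ BddAbove ((· ^ β) '' S) := by
      rintro ⟨M, hM⟩
      refine hbdd ⟨M ^ β⁻¹, fun s hs => ?_⟩
      calc s = (s ^ β) ^ β⁻¹ := (Real.rpow_rpow_inv (hS s hs) hβ.ne').symm
        _ ≤ M ^ β⁻¹ := Real.rpow_le_rpow (Real.rpow_nonneg (hS s hs) _)
          (hM (mem_image_of_mem _ hs)) (inv_nonneg.2 hβ.le)
    rw [Real.sSup_of_not_bddAbove hbdd, Real.sSup_of_not_bddAbove hbdd', Real.zero_rpow hβ.ne']

lemma csInf_le_mul_csInf {S T : Set ℝ} {K : ℝ} (hK : 0 < K) (hS : ∀ s ∈ S, 0 ≤ s)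
    (hST : S.Nonempty → T.Nonempty) (hTS : ∀ t ∈ T, ∃ s ∈ S, s ≤ K * t) :
    sInf S ≤ K * sInf T := by
  rcases T.eq_empty_or_nonempty with rfl | hT
  · rw [not_nonempty_iff_eq_empty.1 fun h => (hST h).ne_empty rfl]
    simp
  · rw [← div_le_iff₀' hK]
    refine le_csInf hT fun t ht => ?_
    obtain ⟨s, hs, hsK⟩ := hTS t ht
    rw [div_le_iff₀' hK]
    exact (csInf_le ⟨0, hS⟩ hs).trans hsK

lemma csSup_le_mul_csSup {S T : Set ℝ} {K : ℝ} (hK : 0 ≤ K)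
    (hST : ∀ s ∈ S, ∃ t ∈ T, s ≤ K * t) (hTS : ∀ t ∈ T, ∃ s ∈ S, t ≤ K * s) :
    sSup S ≤ K * sSup T := by
  by_cases hT : BddAbove T
  · rcases S.eq_empty_or_nonempty with rfl | hS
    · obtain rfl : T = ∅ := eq_empty_of_forall_notMem fun t ht => by simpa using hTS t ht
      simp
    · refine csSup_le hS fun s hs => ?_
      obtain ⟨t, ht, hst⟩ := hST s hs
      exact hst.trans (mul_le_mul_of_nonneg_left (le_csSup hT ht) hK)
  · have hS : ¬ BddAbove S := fun ⟨M, hM⟩ => hT ⟨K * M, fun t ht => by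
      obtain ⟨s, hs, hts⟩ := hTS t ht
      exact hts.trans (mul_le_mul_of_nonneg_left (hM hs) hK)⟩
    rw [Real.sSup_of_not_bddAbove hS, Real.sSup_of_not_bddAbove hT, mul_zero]

namespace Cube

lemma vol_pos (Q : Cube n) : 0 < Q.vol := pow_pos Q.side_pos n

lemma volume_toSet (Q : Cube n) : volume Q.toSet = ENNReal.ofReal Q.vol := by
  have h : Q.toSet = Icc Q.corner (fun i => Q.corner i + Q.side) := by
    ext x
    simp [Cube.toSet, Pi.le_def, forall_and]
  rw [h, Real.volume_Icc_pi]
  simp only [add_sub_cancel_left, Finset.prod_const, Finset.card_univ, Fintype.card_fin]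
  rw [← ENNReal.ofReal_pow Q.side_pos.le, vol]

lemma measureReal_toSet (Q : Cube n) : volume.real Q.toSet = Q.vol := by
  rw [measureReal_def, volume_toSet, ENNReal.toReal_ofReal Q.vol_pos.le]

instance (Q : Cube n) : IsFiniteMeasure (volume.restrict Q.toSet) :=
  ⟨by simp [volume_toSet]⟩

end Cube

lemma cubeAvg_le_one_of_two_mul_le {Q : Cube n} {F G : (Fin n → ℝ) → ℝ} (hF : ∀ y, 0 ≤ F y)
    (hFG : ∀ y, 2 * F y ≤ G y + 1) (hG : Integrable G (volume.restrict Q.toSet))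
    (hG1 : cubeAvg Q G ≤ 1) : cubeAvg Q F ≤ 1 := by
  have hmono : ∫ y in Q.toSet, 2 * F y ≤ ∫ y in Q.toSet, (G y + 1) :=
    integral_mono_of_nonneg (ae_of_all _ fun y => mul_nonneg zero_le_two (hF y))
      (hG.add (integrable_const 1)) (ae_of_all _ hFG)
  rw [integral_const_mul, integral_add hG (integrable_const 1), setIntegral_const,
    Q.measureReal_toSet, smul_eq_mul, mul_one] at hmono
  unfold cubeAvg at hG1 ⊢
  rw [inv_mul_le_iff₀ Q.vol_pos, mul_one] at hG1 ⊢
  linarith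

def luxSet (Φ : ℝ → ℝ) (Q : Cube n) (f : (Fin n → ℝ) → ℝ) : Set ℝ :=
  {lam | 0 < lam ∧ cubeAvg Q (fun x => Φ (|f x| / lam)) ≤ 1}

lemma luxAvg_eq_sInf_luxSet (Φ : ℝ → ℝ) (Q : Cube n) (f : (Fin n → ℝ) → ℝ) :
    luxAvg Φ Q f = sInf (luxSet Φ Q f) := rfl

lemma luxAvg_nonneg (Φ : ℝ → ℝ) (Q : Cube n) (f : (Fin n → ℝ) → ℝ) : 0 ≤ luxAvg Φ Q f :=
  Real.sInf_nonneg fun _ h => h.1.le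

lemma maximalOp_nonneg (Φ : ℝ → ℝ) (f : (Fin n → ℝ) → ℝ) (x : Fin n → ℝ) :
    0 ≤ maximalOp Φ f x :=
  Real.sSup_nonneg (by rintro _ ⟨Q, -, rfl⟩; exact luxAvg_nonneg Φ Q f)

lemma luxAvg_congr {Φ Ψ : ℝ → ℝ} (h : EqOn Φ Ψ (Ici 0)) (Q : Cube n) (f : (Fin n → ℝ) → ℝ) :
    luxAvg Φ Q f = luxAvg Ψ Q f := by
  rw [luxAvg_eq_sInf_luxSet, luxAvg_eq_sInf_luxSet]
  congr 1
  ext lam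
  simp only [luxSet, mem_ofPred_eq]
  refine and_congr_right fun hlam => ?_
  rw [show (fun x => Φ (|f x| / lam)) = fun x => Ψ (|f x| / lam) from
    funext fun x => h (div_nonneg (abs_nonneg _) hlam.le)]

lemma maximalOp_congr {Φ Ψ : ℝ → ℝ} (h : EqOn Φ Ψ (Ici 0)) (f : (Fin n → ℝ) → ℝ) :
    maximalOp Φ f = maximalOp Ψ f := by
  funext x
  simp only [maximalOp, luxAvg_congr h]

lemma luxSet_rpow (Φ : ℝ → ℝ) (Q : Cube n) {f : (Fin n → ℝ) → ℝ} (hf : ∀ y, 0 ≤ f y) {β : ℝ}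
    (hβ : 0 < β) :
    luxSet Φ Q (fun y => f y ^ β) = (· ^ β) '' luxSet (fun t => Φ (t ^ β)) Q f := by
  have key : ∀ t, 0 < t → (cubeAvg Q fun x => Φ (|f x ^ β| / t ^ β)) =
      cubeAvg Q fun x => Φ ((|f x| / t) ^ β) := by
    intro t ht
    simp only [abs_of_nonneg (hf _), abs_of_nonneg (Real.rpow_nonneg (hf _) _),
      Real.div_rpow (hf _) ht.le]
  ext mu
  constructor
  · rintro ⟨hmu, h⟩
    refine ⟨mu ^ β⁻¹, ⟨by positivity, ?_⟩, Real.rpow_inv_rpow hmu.le hβ.ne'⟩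
    rwa [← key _ (by positivity), Real.rpow_inv_rpow hmu.le hβ.ne']
  · rintro ⟨t, ⟨ht, h⟩, rfl⟩
    exact ⟨by positivity, by rwa [key t ht]⟩

lemma luxAvg_rpow (Φ : ℝ → ℝ) (Q : Cube n) {f : (Fin n → ℝ) → ℝ} (hf : ∀ y, 0 ≤ f y) {β : ℝ}
    (hβ : 0 < β) :
    luxAvg Φ Q (fun y => f y ^ β) = luxAvg (fun t => Φ (t ^ β)) Q f ^ β := by
  rw [luxAvg_eq_sInf_luxSet, luxSet_rpow Φ Q hf hβ, sInf_image_rpow (fun _ h => h.1.le) hβ]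
  rfl

lemma maximalOp_rpow (Φ : ℝ → ℝ) {f : (Fin n → ℝ) → ℝ} (hf : ∀ y, 0 ≤ f y) {β : ℝ}
    (hβ : 0 < β) (x : Fin n → ℝ) :
    maximalOp Φ (fun y => f y ^ β) x = maximalOp (fun t => Φ (t ^ β)) f x ^ β := by
  have himage : {r | ∃ Q : Cube n, x ∈ Q.toSet ∧ r = luxAvg Φ Q fun y => f y ^ β} =
      (· ^ β) '' {r | ∃ Q : Cube n, x ∈ Q.toSet ∧ r = luxAvg (fun t => Φ (t ^ β)) Q f} := by
    ext r
    simp [luxAvg_rpow Φ _ hf hβ, eq_comm]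
  rw [maximalOp, maximalOp, himage, sSup_image_rpow _ hβ]
  rintro _ ⟨Q, -, rfl⟩
  exact luxAvg_nonneg _ Q f

def ScaleDominated (K : ℝ) (Φ Ψ : ℝ → ℝ) : Prop :=
  ∀ t, 0 ≤ t → 2 * Φ (t / K) ≤ Ψ t + 1

/-- When `Ψ (|f| / lam)` is not integrable, neither is `Φ (K * |f| / lam)`, which dominates it,
so `lam / K` passes the Luxemburg test for `Φ` through the junk value `0` of the integral. -/
lemma exists_mem_luxSet_le {Φ Ψ : ℝ → ℝ} {K : ℝ} (hK : 1 ≤ K) (hΦΨ : ScaleDominated K Φ Ψ)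
    (hΨΦ : ScaleDominated K Ψ Φ) (hΦ : ∀ t, 0 ≤ t → 0 ≤ Φ t) (hΨ : ∀ t, 0 ≤ t → 0 ≤ Ψ t)
    (hΨm : Measurable Ψ) {Q : Cube n} {f : (Fin n → ℝ) → ℝ}
    (hf : AEMeasurable f (volume.restrict Q.toSet)) {lam : ℝ} (hlam : lam ∈ luxSet Ψ Q f) :
    ∃ mu ∈ luxSet Φ Q f, mu ≤ K * lam := by
  obtain ⟨hlam0, hlam1⟩ := hlam
  have hK0 : 0 < K := one_pos.trans_le hK
  by_cases hint : Integrable (fun x => Ψ (|f x| / lam)) (volume.restrict Q.toSet)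
  · refine ⟨K * lam, ⟨by positivity, ?_⟩, le_rfl⟩
    refine cubeAvg_le_one_of_two_mul_le (fun x => hΦ _ (by positivity)) (fun x => ?_) hint hlam1
    rw [mul_comm K, ← div_div]
    exact hΦΨ _ (by positivity)
  · refine ⟨lam / K, ⟨by positivity, ?_⟩,
      (div_le_self hlam0.le hK).trans (le_mul_of_one_le_left hlam0.le hK)⟩
    have hnot : ¬ Integrable (fun x => Φ (|f x| / (lam / K))) (volume.restrict Q.toSet) := by
      refine fun hΦint => hint (Integrable.mono' ((hΦint.add (integrable_const 1)).div_const 2)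
        (hΨm.comp_aemeasurable (hf.abs.div_const lam)).aestronglyMeasurable
        (ae_of_all _ fun x => ?_))
      have h := hΨΦ (|f x| / (lam / K)) (by positivity)
      rw [div_div, div_mul_cancel₀ _ hK0.ne'] at h
      rw [Real.norm_of_nonneg (hΨ _ (by positivity)), Pi.add_apply]
      linarith
    simp [cubeAvg, integral_undef hnot]

lemma luxAvg_le_mul_luxAvg {Φ Ψ : ℝ → ℝ} {K : ℝ} (hK : 1 ≤ K) (hΦΨ : ScaleDominated K Φ Ψ)
    (hΨΦ : ScaleDominated K Ψ Φ) (hΦ : ∀ t, 0 ≤ t → 0 ≤ Φ t) (hΨ : ∀ t, 0 ≤ t → 0 ≤ Ψ t)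
    (hΦm : Measurable Φ) (hΨm : Measurable Ψ) {Q : Cube n} {f : (Fin n → ℝ) → ℝ}
    (hf : AEMeasurable f (volume.restrict Q.toSet)) :
    luxAvg Φ Q f ≤ K * luxAvg Ψ Q f :=
  csInf_le_mul_csInf (one_pos.trans_le hK) (fun _ h => h.1.le)
    (fun ⟨_, hmu⟩ => (exists_mem_luxSet_le hK hΨΦ hΦΨ hΨ hΦ hΦm hf hmu).imp fun _ h => h.1)
    (fun _ hlam => exists_mem_luxSet_le hK hΦΨ hΨΦ hΦ hΨ hΨm hf hlam)

lemma maximalOp_le_mul_maximalOp {Φ Ψ : ℝ → ℝ} {f g : (Fin n → ℝ) → ℝ} {K : ℝ} (hK : 0 ≤ K)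
    (hΦΨ : ∀ Q, luxAvg Φ Q f ≤ K * luxAvg Ψ Q g) (hΨΦ : ∀ Q, luxAvg Ψ Q g ≤ K * luxAvg Φ Q f)
    (x : Fin n → ℝ) : maximalOp Φ f x ≤ K * maximalOp Ψ g x :=
  csSup_le_mul_csSup hK (by rintro _ ⟨Q, hx, rfl⟩; exact ⟨_, ⟨Q, hx, rfl⟩, hΦΨ Q⟩)
    (by rintro _ ⟨Q, hx, rfl⟩; exact ⟨_, ⟨Q, hx, rfl⟩, hΨΦ Q⟩)

lemma maximalOp_le_mul_maximalOp_of_scaleDominated {Φ Ψ : ℝ → ℝ} {K : ℝ} (hK : 1 ≤ K)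
    (hΦΨ : ScaleDominated K Φ Ψ) (hΨΦ : ScaleDominated K Ψ Φ) (hΦ : ∀ t, 0 ≤ t → 0 ≤ Φ t)
    (hΨ : ∀ t, 0 ≤ t → 0 ≤ Ψ t) (hΦm : Measurable Φ) (hΨm : Measurable Ψ)
    {f : (Fin n → ℝ) → ℝ} (hf : AEMeasurable f) (x : Fin n → ℝ) :
    maximalOp Φ f x ≤ K * maximalOp Ψ f x :=
  maximalOp_le_mul_maximalOp (zero_le_one.trans hK)
    (fun _ => luxAvg_le_mul_luxAvg hK hΦΨ hΨΦ hΦ hΨ hΦm hΨm hf.restrict)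
    (fun _ => luxAvg_le_mul_luxAvg hK hΨΦ hΦΨ hΨ hΦ hΨm hΦm hf.restrict) x

def powLog (q a c ν t : ℝ) : ℝ :=
  if t ≤ 1 then t ^ q else t ^ a * (1 + c * Real.log t) ^ ν

section powLog

variable {q q' a c c' ν : ℝ}

lemma measurable_powLog (q a c ν : ℝ) : Measurable (powLog q a c ν) :=
  Measurable.ite (measurableSet_le measurable_id measurable_const) (measurable_id.pow_const q)
    ((measurable_id.pow_const a).mul
      ((measurable_const.add (measurable_const.mul Real.measurable_log)).pow_const ν))

lemma powLog_nonneg (hc : 0 ≤ c) {t : ℝ} (ht : 0 ≤ t) : 0 ≤ powLog q a c ν t := by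
  unfold powLog
  split_ifs with h
  · positivity
  · have : 0 ≤ Real.log t := Real.log_nonneg (not_le.1 h).le
    positivity

lemma rpow_le_powLog_add_one (ha : 0 ≤ a) (hc : 0 ≤ c) (hν : 0 ≤ ν) {t : ℝ} (ht : 0 ≤ t) :
    t ^ a ≤ powLog q a c ν t + 1 := by
  unfold powLog
  split_ifs with h
  · linarith [Real.rpow_le_one ht h ha, Real.rpow_nonneg ht q]
  · have : 0 ≤ Real.log t := Real.log_nonneg (not_le.1 h).le
    have h1 : 1 ≤ (1 + c * Real.log t) ^ ν := Real.one_le_rpow (by nlinarith) hν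
    nlinarith [Real.rpow_nonneg ht a]

lemma one_add_mul_log_le (hc' : 0 < c') {u w : ℝ} (hu : 1 ≤ u) (huw : u ≤ w) :
    1 + c * Real.log u ≤ max (c / c') 1 * (1 + c' * Real.log w) := by
  have hlu : 0 ≤ Real.log u := Real.log_nonneg hu
  have hlw : Real.log u ≤ Real.log w := Real.log_le_log (by linarith) huw
  have hlog : c * Real.log u ≤ max (c / c') 1 * (c' * Real.log w) :=
    calc c * Real.log u = c / c' * (c' * Real.log u) := by field_simp
      _ ≤ max (c / c') 1 * (c' * Real.log w) := by gcongr; exact le_max_left _ _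
  rw [mul_add, mul_one]
  linarith [le_max_right (c / c') 1]

lemma scaleDominated_powLog (ha : 0 < a) (haq : a ≤ q) (hc : 0 ≤ c) (hc' : 0 < c')
    (hν : 0 ≤ ν) {K : ℝ} (hK : 1 ≤ K) (hKa : 2 * max (c / c') 1 ^ ν ≤ K ^ a) :
    ScaleDominated K (powLog q a c ν) (powLog q' a c' ν) := by
  intro t ht
  have hK0 : 0 < K := one_pos.trans_le hK
  have hKa0 : 0 < K ^ a := by positivity
  have hM : 1 ≤ max (c / c') 1 ^ ν := Real.one_le_rpow (le_max_right _ _) hν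
  have htK : t / K ≤ t := div_le_self ht hK
  have hpow : (t / K) ^ a = t ^ a / K ^ a := Real.div_rpow ht hK0.le a
  rcases le_or_gt (t / K) 1 with h | h
  · rw [show powLog q a c ν (t / K) = (t / K) ^ q from if_pos h]
    have h1 : (t / K) ^ q ≤ t ^ a / K ^ a :=
      hpow ▸ Real.rpow_le_rpow_of_exponent_ge' (by positivity) h ha.le haq
    have h2 : 2 * (t ^ a / K ^ a) ≤ t ^ a := by
      rw [mul_div_assoc', div_le_iff₀ hKa0]
      nlinarith [Real.rpow_nonneg ht a]
    linarith [rpow_le_powLog_add_one (q := q') ha.le hc'.le hν ht]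
  · have ht1 : 1 < t := h.trans_le htK
    rw [show powLog q a c ν (t / K) = (t / K) ^ a * (1 + c * Real.log (t / K)) ^ ν from
        if_neg (not_le.2 h),
      show powLog q' a c' ν t = t ^ a * (1 + c' * Real.log t) ^ ν from if_neg (not_le.2 ht1)]
    have hlogK : 0 ≤ Real.log (t / K) := Real.log_nonneg h.le
    have hlog : (1 + c * Real.log (t / K)) ^ ν ≤
        max (c / c') 1 ^ ν * (1 + c' * Real.log t) ^ ν := by
      rw [← Real.mul_rpow (by positivity) (by nlinarith [Real.log_nonneg ht1.le])]
      exact Real.rpow_le_rpow (by positivity) (one_add_mul_log_le hc' h.le htK) hν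
    calc 2 * ((t / K) ^ a * (1 + c * Real.log (t / K)) ^ ν)
        ≤ 2 * (t ^ a / K ^ a * (max (c / c') 1 ^ ν * (1 + c' * Real.log t) ^ ν)) := by
          rw [hpow]; gcongr
      _ = 2 * max (c / c') 1 ^ ν / K ^ a * (t ^ a * (1 + c' * Real.log t) ^ ν) := by ring
      _ ≤ 1 * (t ^ a * (1 + c' * Real.log t) ^ ν) := by
          gcongr
          · exact mul_nonneg (Real.rpow_nonneg ht a)
              (Real.rpow_nonneg (by nlinarith [Real.log_nonneg ht1.le]) ν)
          · exact (div_le_one hKa0).2 hKa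
      _ ≤ t ^ a * (1 + c' * Real.log t) ^ ν + 1 := by linarith

lemma maximalOp_powLog_le (ha : 0 < a) (haq : a ≤ q) (haq' : a ≤ q') (hc : 0 < c)
    (hc' : 0 < c') (hν : 0 ≤ ν) {K : ℝ} (hK : 1 ≤ K) (hKa : 2 * max (c / c') 1 ^ ν ≤ K ^ a)
    (hKa' : 2 * max (c' / c) 1 ^ ν ≤ K ^ a) {f : (Fin n → ℝ) → ℝ} (hf : AEMeasurable f)
    (x : Fin n → ℝ) :
    maximalOp (powLog q a c ν) f x ≤ K * maximalOp (powLog q' a c' ν) f x :=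
  maximalOp_le_mul_maximalOp_of_scaleDominated hK
    (scaleDominated_powLog ha haq hc.le hc' hν hK hKa)
    (scaleDominated_powLog ha haq' hc'.le hc hν hK hKa')
    (fun _ => powLog_nonneg hc.le) (fun _ => powLog_nonneg hc'.le)
    (measurable_powLog _ _ _ _) (measurable_powLog _ _ _ _) hf x

end powLog

lemma eqOn_xi_rpow_powLog {q σ ν β : ℝ} (hβ : 0 < β) :
    EqOn (fun t => if t ^ β ≤ 1 then (t ^ β) ^ (q / β) else
      (t ^ β) ^ σ * (1 + logPlus (t ^ β)) ^ ν) (powLog q (β * σ) β ν) (Ici 0) := by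
  intro t (ht : 0 ≤ t)
  dsimp only
  rcases le_or_gt t 1 with h | h
  · rw [powLog, if_pos h, if_pos (Real.rpow_le_one ht h hβ.le), ← Real.rpow_mul ht,
      mul_div_cancel₀ _ hβ.ne']
  · have hβ1 : 1 < t ^ β := Real.one_lt_rpow h hβ
    rw [powLog, if_neg (not_le.2 h), if_neg (not_le.2 hβ1), ← Real.rpow_mul ht, logPlus,
      max_eq_left (Real.log_nonneg hβ1.le), Real.log_rpow (one_pos.trans h)]

lemma eqOn_phi_powLog {a ν : ℝ} :
    EqOn (fun t => t ^ a * (1 + logPlus t) ^ ν) (powLog a a 1 ν) (Ici 0) := by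
  intro t (ht : 0 ≤ t)
  dsimp only
  rcases le_or_gt t 1 with h | h
  · rw [powLog, if_pos h, logPlus, max_eq_right (Real.log_nonpos ht h), add_zero,
      Real.one_rpow, mul_one]
  · rw [powLog, if_neg (not_le.2 h), logPlus, max_eq_left (Real.log_nonneg h.le), one_mul]

lemma fractional_exponents {n r δ γ p q r' σ ν β : ℝ} (hr : 1 ≤ r) (hδ : 0 ≤ δ) (hγ : 0 < γ)
    (hγn : γ < n / r) (hp : r < p) (hpn : p < n / γ) (hq : 1 / q = 1 / p - γ / n)
    (hr' : 1 / r' = 1 - 1 / r) (hσ : σ = n * r / (n - r * γ)) (hν : ν = n * δ / (n - r * γ))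
    (hβ : β = (q / σ) * (1 / p + 1 / r')) :
    0 < β ∧ β * σ = q / p + q / r' ∧ 0 < q / p + q / r' ∧ q / p + q / r' ≤ q ∧ 0 ≤ ν := by
  have hr0 : 0 < r := one_pos.trans_le hr
  have hp0 : 0 < p := hr0.trans hp
  have hrγ : 0 < n - r * γ := sub_pos.2 (by rwa [lt_div_iff₀' hr0] at hγn)
  have hpγ : γ * p < n := by rwa [lt_div_iff₀' hγ] at hpn
  have hn : 0 < n := by nlinarith [mul_pos hr0 hγ]
  have hq0 : 0 < q := by
    refine one_div_pos.1 (hq ▸ sub_pos.2 ?_)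
    rw [div_lt_div_iff₀ hn hp0]
    linarith
  have hσ0 : 0 < σ := hσ ▸ by positivity
  have hr'0 : 0 ≤ 1 / r' := hr' ▸ sub_nonneg.2 ((div_le_one hr0).2 hr)
  have hsum : q / p + q / r' = q * (1 / p + 1 / r') := by ring
  have hsum1 : 1 / p + 1 / r' ≤ 1 := by linarith [one_div_lt_one_div_of_lt hr0 hp]
  refine ⟨hβ ▸ by positivity, ?_, hsum ▸ by positivity,
    hsum ▸ mul_le_of_le_one_right hq0.le hsum1, hν ▸ by positivity⟩
  rw [hβ, hsum]
  field_simp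

theorem maximalOp_xi_pow_le_general
    (r δ γ p q r' σ ν β : ℝ)
    (hr : 1 ≤ r) (hδ : 0 ≤ δ) (hγ : 0 < γ) (hγn : γ < (n : ℝ) / r)
    (hp : r < p) (hpn : p < (n : ℝ) / γ)
    (hq : 1 / q = 1 / p - γ / (n : ℝ)) (hr' : 1 / r' = 1 - 1 / r)
    (hσ : σ = (n : ℝ) * r / ((n : ℝ) - r * γ))
    (hν : ν = (n : ℝ) * δ / ((n : ℝ) - r * γ))
    (hβ : β = (q / σ) * (1 / p + 1 / r')) :
    ∃ C > 0, ∀ v : (Fin n → ℝ) → ℝ, IsWeight v → ∀ x : Fin n → ℝ,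
      (maximalOp (fun z => if z ≤ 1 then z ^ (q / β) else z ^ σ * (1 + logPlus z) ^ ν)
          (fun y => v y ^ β) x) ^ (1 / β) ≤
        C * maximalOp (fun z => z ^ (q / p + q / r') * (1 + logPlus z) ^ ν) v x := by
  obtain ⟨hβ0, hβσ, ha, haq, hν0⟩ :=
    fractional_exponents hr hδ hγ hγn hp hpn hq hr' hσ hν hβ
  obtain ⟨K, hKa, hK⟩ := (((tendsto_rpow_atTop ha).eventually_ge_atTop
    (max (2 * max (β / 1) 1 ^ ν) (2 * max (1 / β) 1 ^ ν))).and (eventually_ge_atTop 1)).exists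
  refine ⟨K, one_pos.trans_le hK, fun v hv x => ?_⟩
  rw [maximalOp_rpow _ hv.1 hβ0, ← Real.rpow_mul (maximalOp_nonneg _ _ _),
    mul_one_div_cancel hβ0.ne', Real.rpow_one,
    maximalOp_congr (hβσ ▸ eqOn_xi_rpow_powLog hβ0), maximalOp_congr eqOn_phi_powLog]
  exact maximalOp_powLog_le ha haq le_rfl hβ0 one_pos hν0 hK (le_max_left _ _ |>.trans hKa)
    (le_max_right _ _ |>.trans hKa) hv.2.aestronglyMeasurable.aemeasurable x

/-- Pointwise control `(M_ξ(v^β))^{1/β} ≲ M_φ v`. -/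
theorem maximalOp_xi_pow_le
    (hn : 0 < n) (r δ γ p q r' σ ν β : ℝ)
    (hr : 1 ≤ r) (hδ : 0 ≤ δ) (hγ : 0 < γ) (hγn : γ < (n : ℝ) / r)
    (hp : r < p) (hpn : p < (n : ℝ) / γ)
    (hq : 1 / q = 1 / p - γ / (n : ℝ)) (hr' : 1 / r' = 1 - 1 / r)
    (hσ : σ = (n : ℝ) * r / ((n : ℝ) - r * γ))
    (hν : ν = (n : ℝ) * δ / ((n : ℝ) - r * γ))
    (hβ : β = (q / σ) * (1 / p + 1 / r')) :
    ∃ C > 0, ∀ v : (Fin n → ℝ) → ℝ, IsWeight v → ∀ x : Fin n → ℝ,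
      (maximalOp (fun z => if z ≤ 1 then z ^ (q / β) else z ^ σ * (1 + logPlus z) ^ ν)
          (fun y => v y ^ β) x) ^ (1 / β) ≤
        C * maximalOp (fun z => z ^ (q / p + q / r') * (1 + logPlus z) ^ ν) v x :=
  maximalOp_xi_pow_le_general r δ γ p q r' σ ν β hr hδ hγ hγn hp hpn hq hr' hσ hν hβ
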